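/- For m ≥ 4, the Hilbert series of K[x_1,x_2,x_3,x_4]/J_0, where J_0 = ⟨x_2x_3, x_3², x_1x_4, x_3x_4, x_4², x_2^m x_4, x_1^{m+2} x_3, x_2^{2m+1}⟩, equals (1 + 3t + t² + t³ + ⋯ + t^m + t^{m+2} + t^{m+4} + t^{m+5} + ⋯ + t^{2m})/(1−t). In particular the coefficients of the numerator are nonnegative, so the Hilbert function of the quotient is non-decreasing. -/

import Mathlib

/-!
Since `J₀` is a monomial ideal, its Hilbert function counts the monomials outside `J₀`.
As `x₃², x₃x₄, x₄² ∈ J₀`, such a monomial of degree `n` is either `x₁^a x₂^b` with `b ≤ 2m`,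
or `x₁^(n-1) x₃` with `n ≤ m + 2` (because of `x₂x₃` and `x₁^(m+2) x₃`), or `x₂^(n-1) x₄` with
`n ≤ m` (because of `x₁x₄` and `x₂^m x₄`). Hence
`HF(n) = min(n, 2m) + 1 + [1 ≤ n ≤ m + 2] + [1 ≤ n ≤ m]`, and multiplying the Hilbert series
by `1 - t` takes first differences of `HF`, which give the numerator; their nonnegativity is
the monotonicity of `HF`.
-/

open MvPolynomial PowerSeries

/-- The Hilbert function of the quotient by a monomial ideal: the number of monomials of
total degree `n` not lying in the ideal. -/
noncomputable def monomialHF {K : Type*} [Field K] {d : ℕ}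
    (I : Ideal (MvPolynomial (Fin d) K)) (n : ℕ) : ℕ :=
  {u : Fin d → ℕ | (∑ i, u i) = n ∧
    (monomial (Finsupp.equivFunOnFinite.symm u) (1 : K)) ∉ I}.ncard

/-- The ideal `J₀` of initial forms, for `m ≥ 4`. -/
noncomputable def Jzero (K : Type*) [Field K] (m : ℕ) : Ideal (MvPolynomial (Fin 4) K) :=
  Ideal.span ({MvPolynomial.X 1 * MvPolynomial.X 2, MvPolynomial.X 2 ^ 2,
    MvPolynomial.X 0 * MvPolynomial.X 3, MvPolynomial.X 2 * MvPolynomial.X 3,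
    MvPolynomial.X 3 ^ 2, MvPolynomial.X 1 ^ m * MvPolynomial.X 3,
    MvPolynomial.X 0 ^ (m + 2) * MvPolynomial.X 2,
    MvPolynomial.X 1 ^ (2 * m + 1)} : Set (MvPolynomial (Fin 4) K))

namespace PowerSeries

variable {R : Type*} [CommRing R]

theorem coeff_zero_mk_mul_one_sub_X (f : ℕ → R) : coeff 0 (mk f * (1 - X)) = f 0 := by
  simp [mul_sub]

theorem coeff_succ_mk_mul_one_sub_X (f : ℕ → R) (n : ℕ) :
    coeff (n + 1) (mk f * (1 - X)) = f (n + 1) - f n := by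
  simp [mul_sub, coeff_succ_mul_X]

theorem mk_mul_one_sub_X_eq_mk {f a : ℕ → R} (h₀ : f 0 = a 0)
    (hsucc : ∀ n, f (n + 1) - f n = a (n + 1)) : mk f * (1 - X) = mk a := by
  ext (_ | n)
  · rw [coeff_zero_mk_mul_one_sub_X, coeff_mk, h₀]
  · rw [coeff_succ_mk_mul_one_sub_X, coeff_mk, hsucc]

theorem monotone_of_mk_mul_one_sub_X_eq [PartialOrder R] [IsOrderedAddMonoid R] {f : ℕ → R}
    {p : R⟦X⟧} (h : mk f * (1 - X) = p) (hp : ∀ n, 0 ≤ coeff n p) : Monotone f := by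
  refine monotone_nat_of_le_succ fun n => sub_nonneg.mp ?_
  rw [← coeff_succ_mk_mul_one_sub_X, h]
  exact hp (n + 1)

theorem sum_range_zsmul_X_pow (c : ℕ → ℤ) (N : ℕ) :
    ∑ k ∈ Finset.range N, c k • (X : R⟦X⟧) ^ k = mk fun n => if n < N then (c n : R) else 0 := by
  ext n
  simp only [coeff_mk, map_sum, map_zsmul, coeff_X_pow]
  simp

end PowerSeries

theorem MvPolynomial.monomial_one_mem_span_monomial_image_iff {σ R : Type*} [CommSemiring R]
    [Nontrivial R] {s : Set (σ →₀ ℕ)} {u : σ →₀ ℕ} :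
    monomial u (1 : R) ∈ Ideal.span ((fun s => monomial s (1 : R)) '' s) ↔ ∃ v ∈ s, v ≤ u := by
  classical
  simp [mem_ideal_span_monomial_image, support_monomial]

namespace Jzero

open Finsupp in
theorem eq_span_monomial (K : Type*) [Field K] (m : ℕ) :
    Jzero K m = Ideal.span ((fun s => MvPolynomial.monomial s (1 : K)) ''
      {single 1 1 + single 2 1, single 2 2, single 0 1 + single 3 1, single 2 1 + single 3 1,
        single 3 2, single 1 m + single 3 1, single 0 (m + 2) + single 2 1,
        single 1 (2 * m + 1)}) := by
  simp only [Jzero, Set.image_insert_eq, Set.image_singleton, MvPolynomial.X,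
    MvPolynomial.monomial_pow, MvPolynomial.monomial_mul, one_pow, smul_single, smul_eq_mul,
    mul_one]

-- Coordinate `i` of an exponent vector is the exponent of `x_{i+1}`.
def exponents (m : ℕ) : Set (Fin 4 → ℕ) :=
  {u | (1 ≤ u 1 ∧ 1 ≤ u 2) ∨ 2 ≤ u 2 ∨ (1 ≤ u 0 ∧ 1 ≤ u 3) ∨ (1 ≤ u 2 ∧ 1 ≤ u 3) ∨ 2 ≤ u 3 ∨
    (m ≤ u 1 ∧ 1 ≤ u 3) ∨ (m + 2 ≤ u 0 ∧ 1 ≤ u 2) ∨ 2 * m + 1 ≤ u 1}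

theorem monomial_mem_iff {K : Type*} [Field K] {m : ℕ} {u : Fin 4 → ℕ} :
    MvPolynomial.monomial (Finsupp.equivFunOnFinite.symm u) (1 : K) ∈ Jzero K m ↔
      u ∈ exponents m := by
  rw [eq_span_monomial, MvPolynomial.monomial_one_mem_span_monomial_image_iff]
  simp [exponents, Finsupp.le_def, Fin.forall_fin_succ]

def standardMonomials (m n : ℕ) : Finset (Fin 4 → ℕ) :=
  (Finset.range (min n (2 * m) + 1)).image (fun b => ![n - b, b, 0, 0]) ∪
    (if 1 ≤ n ∧ n ≤ m + 2 then {![n - 1, 0, 1, 0]} else ∅) ∪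
    (if 1 ≤ n ∧ n ≤ m then {![0, n - 1, 0, 1]} else ∅)

theorem mem_standardMonomials {m n : ℕ} {u : Fin 4 → ℕ} :
    u ∈ standardMonomials m n ↔ ∑ i, u i = n ∧ u ∉ exponents m := by
  simp only [standardMonomials, exponents, Finset.mem_union, Finset.mem_image, Finset.mem_range,
    Fin.sum_univ_four, Set.mem_ofPred_eq]
  split_ifs <;> simp [funext_iff, Fin.forall_fin_succ] <;> omega

def hilbertFunction (m n : ℕ) : ℕ :=
  min n (2 * m) + 1 + (if 1 ≤ n ∧ n ≤ m + 2 then 1 else 0) + (if 1 ≤ n ∧ n ≤ m then 1 else 0)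

theorem card_standardMonomials (m n : ℕ) :
    (standardMonomials m n).card = hilbertFunction m n := by
  have hinj : Function.Injective fun b => (![n - b, b, 0, 0] : Fin 4 → ℕ) :=
    fun b b' h => by simpa using congrFun h 1
  rw [standardMonomials, Finset.card_union_of_disjoint, Finset.card_union_of_disjoint,
    Finset.card_image_of_injective _ hinj, Finset.card_range, hilbertFunction]
  · split_ifs <;> rfl
  all_goals split_ifs <;> simp [funext_iff, Fin.forall_fin_succ]

theorem monomialHF_eq (K : Type*) [Field K] (m n : ℕ) :
    monomialHF (Jzero K m) n = hilbertFunction m n := by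
  rw [monomialHF, ← card_standardMonomials, ← Set.ncard_coe_finset]
  congr 1
  ext u
  simp [mem_standardMonomials, monomial_mem_iff]

def numeratorCoeff (m k : ℕ) : ℤ :=
  if k = 1 then 3
    else if k = 0 ∨ (2 ≤ k ∧ k ≤ m) ∨ k = m + 2 ∨ (m + 4 ≤ k ∧ k ≤ 2 * m) then 1 else 0

theorem numeratorCoeff_nonneg (m k : ℕ) : 0 ≤ numeratorCoeff m k := by
  unfold numeratorCoeff
  split_ifs <;> norm_num

theorem hilbertFunction_succ_sub {m : ℕ} (hm : 4 ≤ m) (n : ℕ) :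
    (hilbertFunction m (n + 1) : ℤ) - hilbertFunction m n =
      if n + 1 < 2 * m + 1 then numeratorCoeff m (n + 1) else 0 := by
  simp only [hilbertFunction, numeratorCoeff, Nat.min_def, Nat.add_one_ne_zero, false_or]
  split_ifs <;> omega

theorem mk_hilbertFunction_mul_one_sub_X {m : ℕ} (hm : 4 ≤ m) :
    (mk fun n => (hilbertFunction m n : ℤ)) * (1 - PowerSeries.X) =
      mk fun n => if n < 2 * m + 1 then numeratorCoeff m n else 0 :=
  PowerSeries.mk_mul_one_sub_X_eq_mk (by simp [hilbertFunction, numeratorCoeff])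
    (hilbertFunction_succ_sub hm)

end Jzero

/-- The Hilbert series of `K[x₁,…,x₄]/J₀` equals
`(1 + 3t + t² + t³ + ⋯ + t^m + t^{m+2} + t^{m+4} + ⋯ + t^{2m})/(1-t)`; the numerator has
nonnegative coefficients, so the Hilbert function is non-decreasing. -/
theorem stmt_11 {K : Type*} [Field K] (m : ℕ) (hm : 4 ≤ m) :
    (PowerSeries.mk fun n => (monomialHF (Jzero K m) n : ℤ)) * (1 - PowerSeries.X) =
      ∑ k ∈ Finset.range (2 * m + 1),
        (if k = 1 then 3
          else if k = 0 ∨ (2 ≤ k ∧ k ≤ m) ∨ k = m + 2 ∨ (m + 4 ≤ k ∧ k ≤ 2 * m) then 1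
          else (0 : ℤ)) • PowerSeries.X ^ k ∧
    Monotone (monomialHF (Jzero K m)) := by
  have hseries : (mk fun n => (monomialHF (Jzero K m) n : ℤ)) * (1 - PowerSeries.X) =
      mk fun n => if n < 2 * m + 1 then Jzero.numeratorCoeff m n else 0 := by
    simpa only [Jzero.monomialHF_eq] using Jzero.mk_hilbertFunction_mul_one_sub_X hm
  simp only [PowerSeries.sum_range_zsmul_X_pow, Int.cast_id]
  refine ⟨hseries, fun a b hab => ?_⟩
  have hmono := PowerSeries.monotone_of_mk_mul_one_sub_X_eq hseries fun n => by
    rw [coeff_mk]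
    split_ifs
    exacts [Jzero.numeratorCoeff_nonneg m n, le_rfl]
  exact Nat.cast_le.mp (hmono hab)
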